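/- arXiv:2502.12391 — 2 statements merged into one kernel-verified Lean document; each statement's English description precedes it below -/
import Mathlib

section
/- Performance difference lemma: for any two policies π and π' in a discounted MDP, V^{π'}(ρ) - V^{π}(ρ) = (1/(1-γ)) · E_{s ∼ d^{π'}_ρ} E_{a ∼ π'(·|s)} [A^{π}(s,a)], where A^{π}(s,a) = Q^{π}(s,a) - V^{π}(s) is the advantage function and d^{π'}_ρ is the discounted state visitation distribution of π' from initial distribution ρ. -/
/-- Performance difference lemma: for any two policies `π` and `π'` in a discounted MDP,
`V^{π'}(ρ) - V^{π}(ρ) = (1/(1-γ)) · E_{s ∼ d^{π'}_ρ} E_{a ∼ π'(·|s)} [A^{π}(s,a)]`. -/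
theorem performance_difference_lemma
    {S A : Type*} [Fintype S] [Fintype A]
    (P : S → A → S → ℝ) (r : S → A → ℝ) (γ : ℝ) (hγ : 0 ≤ γ) (hγ1 : γ < 1)
    (ρ : S → ℝ) (hρpos : ∀ s, 0 ≤ ρ s) (hρsum : ∑ s, ρ s = 1)
    (π π' : S → A → ℝ)
    (hπpos : ∀ s a, 0 ≤ π s a) (hπsum : ∀ s, ∑ a, π s a = 1)
    (hπ'pos : ∀ s a, 0 ≤ π' s a) (hπ'sum : ∀ s, ∑ a, π' s a = 1)
    (hPpos : ∀ s a s', 0 ≤ P s a s') (hPsum : ∀ s a, ∑ s', P s a s' = 1)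
    (V V' : S → ℝ)
    (hV : ∀ s, V s = ∑ a, π s a * (r s a + γ * ∑ s', P s a s' * V s'))
    (hV' : ∀ s, V' s = ∑ a, π' s a * (r s a + γ * ∑ s', P s a s' * V' s'))
    (d : S → ℝ)
    (hd : ∀ s, d s = (1 - γ) * ρ s + γ * ∑ sb, ∑ ab, d sb * π' sb ab * P sb ab s) :
    (∑ s, ρ s * V' s) - (∑ s, ρ s * V s) =
      (1 / (1 - γ)) * ∑ s, d s *
        ∑ a, π' s a * ((r s a + γ * ∑ s', P s a s' * V s') - V s) := by
  set Δ : S → ℝ := fun s => V' s - V s with hΔ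
  have hγne : (1 - γ) ≠ 0 := by linarith
  -- Advantage identity: the inner sum equals Δ s - γ * (one-step expected Δ)
  have key : ∀ s, ∑ a, π' s a * ((r s a + γ * ∑ s', P s a s' * V s') - V s)
      = Δ s - γ * ∑ a, π' s a * ∑ s', P s a s' * Δ s' := by
    intro s
    have h1 : ∀ a, ∑ s', P s a s' * Δ s'
        = (∑ s', P s a s' * V' s') - ∑ s', P s a s' * V s' := by
      intro a
      rw [← Finset.sum_sub_distrib]
      exact Finset.sum_congr rfl fun s' _ => by simp [hΔ]; ring
    have h2 : ∑ a, π' s a * ((r s a + γ * ∑ s', P s a s' * V s') - V s)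
        = (∑ a, π' s a * (r s a + γ * ∑ s', P s a s' * V' s'))
          - γ * (∑ a, π' s a * ∑ s', P s a s' * Δ s')
          - (∑ a, π' s a) * V s := by
      rw [Finset.sum_mul, Finset.mul_sum, ← Finset.sum_sub_distrib, ← Finset.sum_sub_distrib]
      refine Finset.sum_congr rfl fun a _ => ?_
      rw [h1 a]; ring
    rw [h2, ← hV' s, hπ'sum s]
    simp [hΔ]; ring
  -- Visitation identity
  have swap : ∑ s, (∑ sb, ∑ ab, d sb * π' sb ab * P sb ab s) * Δ s
      = ∑ sb, d sb * ∑ ab, π' sb ab * ∑ s, P sb ab s * Δ s := by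
    simp only [Finset.sum_mul, Finset.mul_sum]
    rw [Finset.sum_comm]
    refine Finset.sum_congr rfl fun sb _ => ?_
    rw [Finset.sum_comm]
    exact Finset.sum_congr rfl fun ab _ => Finset.sum_congr rfl fun s _ => by ring
  have main : ∑ s, d s * (Δ s - γ * ∑ a, π' s a * ∑ s', P s a s' * Δ s')
      = (1 - γ) * ∑ s, ρ s * Δ s := by
    have hdΔ : ∑ s, d s * Δ s
        = (1 - γ) * ∑ s, ρ s * Δ s
          + γ * ∑ sb, d sb * ∑ ab, π' sb ab * ∑ s, P sb ab s * Δ s := by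
      calc ∑ s, d s * Δ s
          = ∑ s, ((1 - γ) * ρ s + γ * ∑ sb, ∑ ab, d sb * π' sb ab * P sb ab s) * Δ s := by
            exact Finset.sum_congr rfl fun s _ => by rw [← hd s]
        _ = (1 - γ) * ∑ s, ρ s * Δ s
            + γ * ∑ s, (∑ sb, ∑ ab, d sb * π' sb ab * P sb ab s) * Δ s := by
            rw [Finset.mul_sum, Finset.mul_sum, ← Finset.sum_add_distrib]
            exact Finset.sum_congr rfl fun s _ => by ring
        _ = _ := by rw [swap]
    have expand : ∑ s, d s * (Δ s - γ * ∑ a, π' s a * ∑ s', P s a s' * Δ s')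
        = ∑ s, d s * Δ s - γ * ∑ s, d s * ∑ a, π' s a * ∑ s', P s a s' * Δ s' := by
      rw [Finset.mul_sum, ← Finset.sum_sub_distrib]
      exact Finset.sum_congr rfl fun s _ => by ring
    rw [expand, hdΔ]; ring
  have sums : ∑ s, d s * ∑ a, π' s a * ((r s a + γ * ∑ s', P s a s' * V s') - V s)
      = (1 - γ) * ∑ s, ρ s * Δ s := by
    rw [← main]
    exact Finset.sum_congr rfl fun s _ => by rw [key s]
  rw [sums, ← Finset.sum_sub_distrib]
  rw [Finset.mul_sum, Finset.mul_sum]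
  refine Finset.sum_congr rfl fun s _ => ?_
  field_simp [hΔ]
  ring
end

section
/- Gradient manipulation preserves descent: if g_r, g_c ∈ ℝ^n with ⟨g_r, g_c⟩ < 0, define g_r⁺ = g_r - (⟨g_r,g_c⟩/‖g_c‖²) g_c and g_c⁺ = g_c - (⟨g_c,g_r⟩/‖g_r‖²) g_r, and g = (g_r⁺ + g_c⁺)/2. Then ⟨g, g_r⟩ ≥ 0 and ⟨g, g_c⟩ ≥ 0. -/
open RealInnerProductSpace

/-- Gradient manipulation preserves descent: if `⟨g_r, g_c⟩ < 0`, the averaged projected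
gradient `g = (g_r⁺ + g_c⁺)/2` satisfies `⟨g, g_r⟩ ≥ 0` and `⟨g, g_c⟩ ≥ 0`. -/
theorem gradient_manipulation_preserves_descent
    {n : ℕ} (gr gc : EuclideanSpace ℝ (Fin n))
    (hgr : gr ≠ 0) (hgc : gc ≠ 0) (hconf : ⟪gr, gc⟫ < 0) :
    let grp := gr - (⟪gr, gc⟫ / ‖gc‖ ^ 2) • gc
    let gcp := gc - (⟪gc, gr⟫ / ‖gr‖ ^ 2) • gr
    let g := (2 : ℝ)⁻¹ • (grp + gcp)
    0 ≤ ⟪g, gr⟫ ∧ 0 ≤ ⟪g, gc⟫ := by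
  intro grp gcp g
  have hnr : (0:ℝ) < ‖gr‖ := norm_pos_iff.mpr hgr
  have hnc : (0:ℝ) < ‖gc‖ := norm_pos_iff.mpr hgc
  have hcs : ⟪gr, gc⟫ * ⟪gr, gc⟫ ≤ ‖gr‖ ^ 2 * ‖gc‖ ^ 2 := by
    have h := abs_real_inner_le_norm gr gc
    nlinarith [abs_nonneg ⟪gr, gc⟫, sq_abs ⟪gr, gc⟫, norm_nonneg gr, norm_nonneg gc]
  have hcomm : ⟪gc, gr⟫ = ⟪gr, gc⟫ := real_inner_comm gr gc
  simp only [g, grp, gcp, inner_smul_left, inner_add_left, inner_sub_left,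
    real_inner_self_eq_norm_sq, hcomm, RCLike.ofReal_real_eq_id, id_eq, conj_trivial]
  constructor
  · have h1 : ⟪gr, gc⟫ / ‖gc‖ ^ 2 * ⟪gr, gc⟫ ≤ ‖gr‖ ^ 2 := by
      rw [div_mul_eq_mul_div, div_le_iff₀ (by positivity)]
      nlinarith
    have hx : ⟪gr, gc⟫ / ‖gr‖ ^ 2 * ‖gr‖ ^ 2 = ⟪gr, gc⟫ := by field_simp
    nlinarith [hx]
  · have h1 : ⟪gr, gc⟫ / ‖gr‖ ^ 2 * ⟪gr, gc⟫ ≤ ‖gc‖ ^ 2 := by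
      rw [div_mul_eq_mul_div, div_le_iff₀ (by positivity)]
      nlinarith
    have hx : ⟪gr, gc⟫ / ‖gc‖ ^ 2 * ‖gc‖ ^ 2 = ⟪gr, gc⟫ := by field_simp
    nlinarith [hx]
end
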